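/- The matrices B_{n,m} with entries b^{(n,m)}_{ij} = (i(m+1)/(2(i+m))) δ^j_{i+m} if i+m ≤ n and b^{(n,m)}_{ij} = (-1)^{n-j} (i(m+1)/(2j)) β_{n, i+m-n, j} if i+m > n satisfy B_{n,m} = ((m+1)/2) (B_{n,1})^m for all m ≥ 1; in particular B_{n,0} = (1/2) Id_n. -/

import Mathlib

/-!
With `D = diag(1, …, n)` (`indexScaling`), the factors `i/j` in the entries of `B_{n,m}` are those
of a conjugation by `D`: `B_{n,m} = ((m+1)/2) D P_m D⁻¹`, where row `i` of `P_m` (`betaMatrix`)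
is the unit vector `e_{i+m}` if `i + m ≤ n` and the signed row `((-1)^{n-j} β_{n,i+m-n,j})_j`
otherwise. In particular `B_{n,1}` is conjugate to `P_1`, the companion matrix of
`X^n - σ_1 X^{n-1} + ⋯ + (-1)^n σ_n`.

Multiplying a row vector by `P_1` shifts it one place to the right and adds its last entry times
the last row of `P_1`. On unit vectors this is `e_k ↦ e_{k+1}` (and `e_n ↦` the last row, which
is the β-row of level 1); on β-rows it is exactly the recurrence defining `β`. Hence
`P_{m+1} = P_m P_1`, so `P_m = P_1^m`, and conjugating back gives the theorem.
-/

open Finset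

/-- The `k`-th elementary symmetric function of `l 1, …, l n`. -/
def esymm (n : ℕ) (l : Fin n → ℝ) (k : ℕ) : ℝ :=
  ∑ s ∈ Finset.univ.powersetCard k, ∏ i ∈ s, l i

/-- The coefficients `β_{n,m,i}`: `β_{n,1,i} = σ_{n-i+1}`,
`β_{n,m,i} = β_{n,m-1,n} σ_{n-i+1} - β_{n,m-1,i-1}` for `m > 1`, with `β_{n,m,0} = 0`. -/
def beta (σ : ℕ → ℝ) (n : ℕ) : ℕ → ℕ → ℝ
  | 0, _ => 0
  | 1, i => if i = 0 then 0 else σ (n - i + 1)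
  | m + 2, i =>
      if i = 0 then 0
      else beta σ n (m + 1) n * σ (n - i + 1) - beta σ n (m + 1) (i - 1)

/-- The matrix `B_{n,1}`: superdiagonal entries `i/(i+1)` (1-based) and last row
entries `(-1)^{n-j} (n/j) σ_{n-j+1}`. -/
noncomputable def Bn1 (n : ℕ) (σ : ℕ → ℝ) : Matrix (Fin n) (Fin n) ℝ :=
  Matrix.of fun i j =>
    if i.val = n - 1 then
      (-1 : ℝ) ^ (n - 1 - j.val) * ((n : ℝ) / ((j.val : ℝ) + 1)) * σ (n - j.val)
    else if j.val = i.val + 1 then ((i.val : ℝ) + 1) / ((i.val : ℝ) + 2)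
    else 0

/-- The matrix `B_{n,m}`, with entries (1-based `i,j`):
`(i(m+1)/(2(i+m))) δ^j_{i+m}` if `i+m ≤ n`, and
`(-1)^{n-j} (i(m+1)/(2j)) β_{n,i+m-n,j}` if `i+m > n`. -/
noncomputable def Bnm (n : ℕ) (σ : ℕ → ℝ) (m : ℕ) : Matrix (Fin n) (Fin n) ℝ :=
  Matrix.of fun i j =>
    if i.val + 1 + m ≤ n then
      (if j.val + 1 = i.val + 1 + m then
        ((i.val : ℝ) + 1) * ((m : ℝ) + 1) / (2 * ((i.val : ℝ) + 1 + (m : ℝ))) else 0)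
    else
      (-1 : ℝ) ^ (n - (j.val + 1)) *
        (((i.val : ℝ) + 1) * ((m : ℝ) + 1) / (2 * ((j.val : ℝ) + 1))) *
        beta σ n (i.val + 1 + m - n) (j.val + 1)

open Matrix

def betaRow (σ : ℕ → ℝ) (n r : ℕ) : Fin n → ℝ :=
  fun j => (-1) ^ (n - 1 - j.val) * beta σ n r (j.val + 1)

def betaMatrix (n : ℕ) (σ : ℕ → ℝ) (m : ℕ) : Matrix (Fin n) (Fin n) ℝ :=
  Matrix.of fun i =>
    if h : i.val + m < n then Pi.single ⟨i.val + m, h⟩ 1 else betaRow σ n (i.val + 1 + m - n)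

section betaMatrix

variable (σ : ℕ → ℝ)

lemma beta_zero_right (n m : ℕ) : beta σ n m 0 = 0 := by
  rcases m with _ | _ | m <;> simp [beta]

lemma betaMatrix_row_of_lt {n m : ℕ} {i : Fin n} (h : i.val + m < n) :
    betaMatrix n σ m i = Pi.single ⟨i.val + m, h⟩ 1 :=
  dif_pos h

lemma betaMatrix_row_of_le {n m : ℕ} {i : Fin n} (h : n ≤ i.val + m) :
    betaMatrix n σ m i = betaRow σ n (i.val + 1 + m - n) :=
  dif_neg (Nat.not_lt.mpr h)

lemma betaMatrix_zero (n : ℕ) : betaMatrix n σ 0 = 1 := by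
  ext i j
  simp [betaMatrix_row_of_lt σ (m := 0) i.isLt, one_apply, Pi.single_apply, eq_comm]

lemma vecMul_betaMatrix_one {N : ℕ} (v : Fin (N + 1) → ℝ) :
    v ᵥ* betaMatrix (N + 1) σ 1 =
      v (Fin.last N) • betaRow σ (N + 1) 1 + Fin.cons 0 (fun j => v j.castSucc) := by
  have hrow (k : Fin N) : betaMatrix (N + 1) σ 1 k.castSucc = Pi.single k.succ 1 :=
    betaMatrix_row_of_lt σ (by simp)
  have hlast : betaMatrix (N + 1) σ 1 (Fin.last N) = betaRow σ (N + 1) 1 :=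
    (betaMatrix_row_of_le σ (by simp)).trans (by simp)
  ext j
  refine Fin.cases ?_ (fun j => ?_) j <;>
    simp [vecMul, dotProduct, Fin.sum_univ_castSucc, hrow, hlast, Pi.single_apply, add_comm]

lemma betaRow_vecMul_betaMatrix_one (N r : ℕ) :
    betaRow σ (N + 1) (r + 1) ᵥ* betaMatrix (N + 1) σ 1 = betaRow σ (N + 1) (r + 2) := by
  rw [vecMul_betaMatrix_one]
  ext j
  refine Fin.cases ?_ (fun j => ?_) j
  · simp [betaRow, beta, beta_zero_right]
    ring
  · have hsign : (-1 : ℝ) ^ (N - j.val) = -(-1) ^ (N - (j.val + 1)) := by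
      rw [show N - j.val = N - (j.val + 1) + 1 by omega, pow_succ]
      ring
    simp [betaRow, beta, hsign, show N - (j.val + 1) + 1 = N - j.val by omega]
    ring

lemma betaMatrix_succ (n m : ℕ) :
    betaMatrix n σ (m + 1) = betaMatrix n σ m * betaMatrix n σ 1 := by
  obtain _ | N := n
  · exact Subsingleton.elim _ _
  ext i : 1
  rw [mul_apply_eq_vecMul]
  rcases lt_or_ge (i.val + m + 1) (N + 1) with h | h
  · rw [betaMatrix_row_of_lt σ h, betaMatrix_row_of_lt σ (m := m) (by omega), single_one_vecMul,
      row, betaMatrix_row_of_lt σ (by simp; omega)]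
    rfl
  rcases h.eq_or_lt with h | h
  · rw [betaMatrix_row_of_le σ (by omega), betaMatrix_row_of_lt σ (m := m) (by omega),
      single_one_vecMul, row,
      show (⟨i.val + m, _⟩ : Fin (N + 1)) = Fin.last N from Fin.ext (by simp; omega),
      betaMatrix_row_of_le σ (by simp), show i.val + 1 + (m + 1) - (N + 1) = 1 by omega]
    simp
  · obtain ⟨r, hr⟩ : ∃ r, i.val + 1 + m - (N + 1) = r + 1 := ⟨i.val + m - (N + 1), by omega⟩
    rw [betaMatrix_row_of_le σ (by omega), betaMatrix_row_of_le σ (m := m) (by omega), hr,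
      betaRow_vecMul_betaMatrix_one, show i.val + 1 + (m + 1) - (N + 1) = r + 2 by omega]

lemma betaMatrix_eq_pow (n m : ℕ) : betaMatrix n σ m = betaMatrix n σ 1 ^ m := by
  induction m with
  | zero => exact betaMatrix_zero σ n
  | succ m ih => rw [betaMatrix_succ, ih, pow_succ]

end betaMatrix

noncomputable def indexScaling (n : ℕ) : (Matrix (Fin n) (Fin n) ℝ)ˣ where
  val := diagonal fun i => (i.val : ℝ) + 1
  inv := diagonal fun i => ((i.val : ℝ) + 1)⁻¹
  val_inv := by rw [diagonal_mul_diagonal, ← diagonal_one]; congr; ext i; field_simp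
  inv_val := by rw [diagonal_mul_diagonal, ← diagonal_one]; congr; ext i; field_simp

lemma indexScaling_conj_apply {n : ℕ} (A : Matrix (Fin n) (Fin n) ℝ) (i j : Fin n) :
    ((indexScaling n).val * A * (indexScaling n)⁻¹.val) i j =
      ((i.val : ℝ) + 1) * A i j / ((j.val : ℝ) + 1) := by
  simp [indexScaling, div_eq_mul_inv]

lemma Bn1_eq_conj_betaMatrix_one (n : ℕ) (σ : ℕ → ℝ) :
    Bn1 n σ = (indexScaling n).val * betaMatrix n σ 1 * (indexScaling n)⁻¹.val := by
  ext i j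
  rw [indexScaling_conj_apply]
  by_cases hi : i.val + 1 < n
  · rw [betaMatrix_row_of_lt σ hi]
    simp only [Bn1, of_apply, if_neg (show i.val ≠ n - 1 by omega), Pi.single_apply, Fin.ext_iff]
    split_ifs with hj
    · rw [hj]
      push_cast
      field_simp
      ring
    · simp
  · have hin : i.val + 1 = n := by omega
    have hcast : (i.val : ℝ) + 1 = n := by exact_mod_cast hin
    rw [betaMatrix_row_of_le σ hin.ge, hin, Nat.add_sub_cancel_left]
    simp only [Bn1, of_apply, if_pos (show i.val = n - 1 by omega), betaRow, beta, hcast,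
      if_neg (Nat.succ_ne_zero _), show n - (j.val + 1) + 1 = n - j.val by omega]
    field_simp

lemma Bnm_eq_smul_conj_betaMatrix (n : ℕ) (σ : ℕ → ℝ) (m : ℕ) :
    Bnm n σ m = (((m : ℝ) + 1) / 2) •
      ((indexScaling n).val * betaMatrix n σ m * (indexScaling n)⁻¹.val) := by
  ext i j
  rw [Matrix.smul_apply, indexScaling_conj_apply]
  by_cases hi : i.val + m < n
  · rw [betaMatrix_row_of_lt σ hi]
    simp only [Bnm, of_apply, if_pos (show i.val + 1 + m ≤ n by omega), Pi.single_apply,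
      Fin.ext_iff, smul_eq_mul, show j.val + 1 = i.val + 1 + m ↔ j.val = i.val + m by omega]
    split_ifs with hj
    · have : (i.val : ℝ) + m + 1 ≠ 0 := by positivity
      rw [hj]
      push_cast
      field_simp
      ring
    · simp
  · rw [betaMatrix_row_of_le σ (by omega)]
    simp only [Bnm, of_apply, if_neg (show ¬ i.val + 1 + m ≤ n by omega), betaRow, smul_eq_mul,
      show n - (j.val + 1) = n - 1 - j.val by omega]
    field_simp

theorem Bnm_eq_pow_general (n : ℕ) (σ : ℕ → ℝ) :
    (∀ m : ℕ, 1 ≤ m → Bnm n σ m = (((m : ℝ) + 1) / 2) • (Bn1 n σ) ^ m) ∧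
      Bnm n σ 0 = (1 / 2 : ℝ) • (1 : Matrix (Fin n) (Fin n) ℝ) := by
  have hpow (m : ℕ) : Bnm n σ m = (((m : ℝ) + 1) / 2) • (Bn1 n σ) ^ m := by
    rw [Bnm_eq_smul_conj_betaMatrix, Bn1_eq_conj_betaMatrix_one, Units.conj_pow,
      ← betaMatrix_eq_pow]
  refine ⟨fun m _ => hpow m, ?_⟩
  simpa using hpow 0

/-- `B_{n,m} = ((m+1)/2) (B_{n,1})^m` for all `m ≥ 1`; in particular
`B_{n,0} = (1/2) Id`. -/
theorem Bnm_eq_pow (n : ℕ) (hn : 1 < n) (l : Fin n → ℝ) (σ : ℕ → ℝ)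
    (hσ : ∀ k, σ k = esymm n l k) :
    (∀ m : ℕ, 1 ≤ m → Bnm n σ m = (((m : ℝ) + 1) / 2) • (Bn1 n σ) ^ m) ∧
      Bnm n σ 0 = (1 / 2 : ℝ) • (1 : Matrix (Fin n) (Fin n) ℝ) :=
  Bnm_eq_pow_general n σ
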